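/- arXiv:2305.12862 — 6 statements merged into one kernel-verified Lean document; each statement's English description precedes it below -/
import Mathlib

section
/- Let p₁, p₂ ≥ 0 with p₁ + p₂ = 1, let v₁, v₂ be real numbers, and set C = p₁²v₁ + (p₂ + p₁p₂)v₂. Let a : ℕ → ℝ be any sequence satisfying the recurrence a(n) = C + (p₂ + p₁²)·a(n−2) + p₁p₂·a(n−3) for all n ≥ 4. Then a(n)/n converges, as n → ∞, to C/(2 + p₁p₂) = (p₁²v₁ + (p₂ + p₁p₂)v₂)/(2p₂ + 2p₁² + 3p₁p₂). -/
open Filter Topology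

/-!
Subtracting the linear term `L n` with `L = C / (2 + p₁p₂)` removes the constant `C` from the
recurrence, because `2(p₂ + p₁²) + 3p₁p₂ = 2 + p₁p₂` is the mean lag. The remainder satisfies a
recurrence whose coefficients are nonnegative and sum to `1`, so each of its terms is a convex
combination of earlier ones and it stays bounded by its initial values; hence `a n / n → L`.
-/

lemma abs_le_of_convex_recurrence {b : ℕ → ℝ} {q r M : ℝ} {i j N : ℕ}
    (hq : 0 ≤ q) (hr : 0 ≤ r) (hqr : q + r = 1) (hi : 0 < i) (hj : 0 < j) (hN : 0 < N)
    (hinit : ∀ n < N, |b n| ≤ M)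
    (hrec : ∀ n, N ≤ n → b n = q * b (n - i) + r * b (n - j)) (n : ℕ) :
    |b n| ≤ M := by
  induction n using Nat.strong_induction_on with
  | _ n ih =>
    rcases lt_or_ge n N with hn | hn
    · exact hinit n hn
    · calc |b n| = |q * b (n - i) + r * b (n - j)| := by rw [hrec n hn]
        _ ≤ q * |b (n - i)| + r * |b (n - j)| := by
          simpa only [abs_mul, abs_of_nonneg hq, abs_of_nonneg hr] using abs_add_le (q * b (n - i)) (r * b (n - j))
        _ ≤ q * M + r * M := by
          gcongr
          · exact ih _ (by omega)
          · exact ih _ (by omega)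
        _ = M := by rw [← add_mul, hqr, one_mul]

lemma sub_linear_recurrence {a : ℕ → ℝ} {C q r L : ℝ} {i j N : ℕ}
    (hqr : q + r = 1) (hL : L * (i * q + j * r) = C) (hiN : i ≤ N) (hjN : j ≤ N)
    (hrec : ∀ n, N ≤ n → a n = C + q * a (n - i) + r * a (n - j)) (n : ℕ) (hn : N ≤ n) :
    a n - L * n = q * (a (n - i) - L * ↑(n - i)) + r * (a (n - j) - L * ↑(n - j)) := by
  rw [hrec n hn, Nat.cast_sub (hiN.trans hn), Nat.cast_sub (hjN.trans hn), ← hL]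
  linear_combination (L * n) * hqr

lemma tendsto_div_natCast_of_abs_sub_mul_le {a : ℕ → ℝ} {L M : ℝ}
    (h : ∀ n, |a n - L * n| ≤ M) : Tendsto (fun n : ℕ => a n / n) atTop (𝓝 L) := by
  have hdiff : Tendsto (fun n : ℕ => (a n - L * n) / n) atTop (𝓝 0) := by
    refine squeeze_zero_norm (fun n => ?_) (tendsto_const_div_atTop_nhds_zero_nat M)
    rw [norm_div, Real.norm_natCast, Real.norm_eq_abs]
    exact div_le_div_of_nonneg_right (h n) n.cast_nonneg
  have heq : ∀ᶠ n : ℕ in atTop, (a n - L * n) / n + L = a n / n := by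
    filter_upwards [eventually_gt_atTop 0] with n hn
    field_simp
    ring
  simpa using (hdiff.add_const L).congr' heq

theorem greedy_linear_recurrence_asymptotics_general
    (p₁ p₂ : ℝ) (hp₁ : 0 ≤ p₁) (hp₂ : 0 ≤ p₂) (hsum : p₁ + p₂ = 1)
    (C : ℝ)
    (a : ℕ → ℝ)
    (ha : ∀ n : ℕ, 4 ≤ n →
      a n = C + (p₂ + p₁ ^ 2) * a (n - 2) + p₁ * p₂ * a (n - 3)) :
    Tendsto (fun n : ℕ => a n / n) atTop (nhds (C / (2 + p₁ * p₂))) := by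
  have hr : 0 ≤ p₁ * p₂ := mul_nonneg hp₁ hp₂
  have hqr : (p₂ + p₁ ^ 2) + p₁ * p₂ = 1 := by linear_combination (1 + p₁) * hsum
  have hL : C / (2 + p₁ * p₂) * ((2 : ℕ) * (p₂ + p₁ ^ 2) + (3 : ℕ) * (p₁ * p₂)) = C := by
    rw [div_mul_eq_mul_div, div_eq_iff (by positivity)]
    linear_combination 2 * C * hqr
  set L := C / (2 + p₁ * p₂)
  refine tendsto_div_natCast_of_abs_sub_mul_le
    (M := ∑ m ∈ Finset.range 4, |a m - L * m|) fun n => ?_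
  refine abs_le_of_convex_recurrence (by positivity) hr hqr (i := 2) (j := 3) (N := 4)
    (by norm_num) (by norm_num) (by norm_num) (fun m hm => ?_)
    (sub_linear_recurrence hqr hL (by norm_num) (by norm_num) ha) n
  exact Finset.single_le_sum (fun k _ => abs_nonneg (a k - L * k)) (Finset.mem_range.2 hm)

/-- Any sequence satisfying the renewal recurrence
`a n = C + (p₂ + p₁²)·a (n−2) + p₁p₂·a (n−3)` for `n ≥ 4`, where
`C = p₁²v₁ + (p₂ + p₁p₂)v₂` and `p₁ + p₂ = 1`, `p₁, p₂ ≥ 0`, satisfies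
`a n / n → C / (2 + p₁p₂)`. -/
theorem greedy_linear_recurrence_asymptotics
    (p₁ p₂ v₁ v₂ : ℝ) (hp₁ : 0 ≤ p₁) (hp₂ : 0 ≤ p₂) (hsum : p₁ + p₂ = 1)
    (C : ℝ) (hC : C = p₁ ^ 2 * v₁ + (p₂ + p₁ * p₂) * v₂)
    (a : ℕ → ℝ)
    (ha : ∀ n : ℕ, 4 ≤ n →
      a n = C + (p₂ + p₁ ^ 2) * a (n - 2) + p₁ * p₂ * a (n - 3)) :
    Tendsto (fun n : ℕ => a n / n) atTop (nhds (C / (2 + p₁ * p₂))) :=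
  greedy_linear_recurrence_asymptotics_general p₁ p₂ hp₁ hp₂ hsum C a ha
end

section
/- Let p₁, p₂ ≥ 0 with p₁ + p₂ = 1, let v₁, v₂ ∈ ℝ, and set C = p₁²v₁ + (p₂ + p₁p₂)v₂. Suppose a : ℕ → ℝ satisfies a(1) = 0, a(2) = p₁v₁ + p₂v₂, and a(n) = C + (p₂ + p₁²)·a(n−2) + p₁p₂·a(n−3) for all n ≥ 3 (where a(0) is interpreted as 0 in the case n = 3). Then for all n ≥ 3: a(n) + a(n−1) + p₁p₂·a(n−2) = C·(n−2) + p₁v₁ + p₂v₂. -/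
/-!
Write `q = p₁p₂` and `r = p₂ + p₁²`. Since `p₁ + p₂ = 1` we have `r + q = 1`, so substituting the
recurrence into `a (n+1) + a n + q a (n-1)` gives `a n + a (n-1) + q a (n-2) + C`: the window
`a n + a (n-1) + q a (n-2)` grows by exactly `C` per step, and at `n = 2` it equals
`a 2 = p₁v₁ + p₂v₂`.
-/

section Telescope

variable {R : Type*} [CommRing R] {a : ℕ → R} {C r q : R}

theorem recurrence_window_succ (hrq : r + q = 1)
    (ha : ∀ n, a (n + 3) = C + r * a (n + 1) + q * a n) (n : ℕ) :
    a (n + 3) + a (n + 2) + q * a (n + 1) = a (n + 2) + a (n + 1) + q * a n + C := by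
  rw [ha n]
  linear_combination a (n + 1) * hrq

theorem recurrence_window_eq (hrq : r + q = 1)
    (ha : ∀ n, a (n + 3) = C + r * a (n + 1) + q * a n) (n : ℕ) :
    a (n + 2) + a (n + 1) + q * a n = a 2 + a 1 + q * a 0 + n * C := by
  induction n with
  | zero => simp
  | succ n ih =>
    push_cast
    linear_combination recurrence_window_succ hrq ha n + ih

end Telescope

theorem greedy_linear_recurrence_telescope_general
    (p₁ p₂ v₁ v₂ : ℝ) (hsum : p₁ + p₂ = 1)
    (C : ℝ)
    (a : ℕ → ℝ) (h0 : a 0 = 0) (h1 : a 1 = 0) (h2 : a 2 = p₁ * v₁ + p₂ * v₂)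
    (ha : ∀ n : ℕ, 3 ≤ n →
      a n = C + (p₂ + p₁ ^ 2) * a (n - 2) + p₁ * p₂ * a (n - 3)) :
    ∀ n : ℕ, 3 ≤ n →
      a n + a (n - 1) + p₁ * p₂ * a (n - 2) =
        C * ((n : ℝ) - 2) + p₁ * v₁ + p₂ * v₂ := by
  intro n hn
  obtain ⟨m, rfl⟩ := Nat.exists_eq_add_of_le' hn
  have hrq : p₂ + p₁ ^ 2 + p₁ * p₂ = 1 := by linear_combination (1 + p₁) * hsum
  have ha' : ∀ n, a (n + 3) = C + (p₂ + p₁ ^ 2) * a (n + 1) + p₁ * p₂ * a n := fun n => by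
    simpa using ha (n + 3) (by omega)
  have hwindow := recurrence_window_eq hrq ha' (m + 1)
  simp only [h0, h1, h2] at hwindow
  rw [show m + 3 - 1 = m + 2 by omega, show m + 3 - 2 = m + 1 by omega]
  push_cast at hwindow ⊢
  linear_combination hwindow

/-- Telescoping identity for the greedy-matching recurrence in linear networks:
if `a 0 = 0`, `a 1 = 0`, `a 2 = p₁v₁ + p₂v₂` and
`a n = C + (p₂ + p₁²)·a (n−2) + p₁p₂·a (n−3)` for all `n ≥ 3`
(with `C = p₁²v₁ + (p₂ + p₁p₂)v₂`, `p₁ + p₂ = 1`, `p₁, p₂ ≥ 0`), then for all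
`n ≥ 3` we have `a n + a (n−1) + p₁p₂·a (n−2) = C·(n−2) + p₁v₁ + p₂v₂`. -/
theorem greedy_linear_recurrence_telescope
    (p₁ p₂ v₁ v₂ : ℝ) (hp₁ : 0 ≤ p₁) (hp₂ : 0 ≤ p₂) (hsum : p₁ + p₂ = 1)
    (C : ℝ) (hC : C = p₁ ^ 2 * v₁ + (p₂ + p₁ * p₂) * v₂)
    (a : ℕ → ℝ) (h0 : a 0 = 0) (h1 : a 1 = 0) (h2 : a 2 = p₁ * v₁ + p₂ * v₂)
    (ha : ∀ n : ℕ, 3 ≤ n →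
      a n = C + (p₂ + p₁ ^ 2) * a (n - 2) + p₁ * p₂ * a (n - 3)) :
    ∀ n : ℕ, 3 ≤ n →
      a n + a (n - 1) + p₁ * p₂ * a (n - 2) =
        C * ((n : ℝ) - 2) + p₁ * v₁ + p₂ * v₂ :=
  greedy_linear_recurrence_telescope_general p₁ p₂ v₁ v₂ hsum C a h0 h1 h2 ha
end

section
/- Let v₁, v₂ be real numbers with 0 ≤ v₁ ≤ v₂ and v₂ > 0, and let p₁ ∈ [0,1] with p₂ = 1 − p₁. Then (p₁²v₁ + (p₂ + p₁p₂)v₂) ≥ (8/9) · (2p₂ + 2p₁² + 3p₁p₂) · (v₁/2 + (v₂ − v₁)·(1 − p₁)/(2 − p₁)), with equality for the ratio achieved in the limit v₂/v₁ → 1⁺ with p₁ = p₂ = 1/2. -/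
/-! Since `2p₂ + 2p₁² + 3p₁p₂ = (2 - p₁)(1 + p₁)` when `p₂ = 1 - p₁`, the denominator
`2 - p₁` cancels and the gap between the two sides is linear in `v₁` and `v₂ - v₁`, with coefficients
`(2p₁ - 1)² / 9` and `(1 - p₁²) / 9`; both are nonnegative, and both terms vanish at
`p₁ = 1/2`, `v₁ = v₂`. -/

theorem greedy_ratio_gap_eq (v₁ v₂ p : ℝ) (hp : p ≠ 2) :
    p ^ 2 * v₁ + ((1 - p) + p * (1 - p)) * v₂ -
        (8 / 9) * (2 * (1 - p) + 2 * p ^ 2 + 3 * p * (1 - p)) *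
          (v₁ / 2 + (v₂ - v₁) * (1 - p) / (2 - p)) =
      ((2 * p - 1) ^ 2 * v₁ + (1 - p ^ 2) * (v₂ - v₁)) / 9 := by
  have : 2 - p ≠ 0 := sub_ne_zero.mpr (Ne.symm hp)
  field_simp
  ring

theorem greedy_linear_ratio_ge_eight_ninths_general
    (v₁ v₂ : ℝ) (hv₁ : 0 ≤ v₁) (hv : v₁ ≤ v₂)
    (p₁ : ℝ) (hp₁0 : 0 ≤ p₁) (hp₁1 : p₁ ≤ 1) (p₂ : ℝ) (hp₂ : p₂ = 1 - p₁) :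
    (p₁ ^ 2 * v₁ + (p₂ + p₁ * p₂) * v₂ ≥
      (8 / 9) * (2 * p₂ + 2 * p₁ ^ 2 + 3 * p₁ * p₂) *
        (v₁ / 2 + (v₂ - v₁) * (1 - p₁) / (2 - p₁))) ∧
    ((p₁ = 1 / 2 ∧ v₁ = v₂) →
      p₁ ^ 2 * v₁ + (p₂ + p₁ * p₂) * v₂ =
        (8 / 9) * (2 * p₂ + 2 * p₁ ^ 2 + 3 * p₁ * p₂) *
          (v₁ / 2 + (v₂ - v₁) * (1 - p₁) / (2 - p₁))) := by
  subst hp₂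
  constructor
  · have gap := greedy_ratio_gap_eq v₁ v₂ p₁ (by linarith)
    have hv₁_term : 0 ≤ (2 * p₁ - 1) ^ 2 * v₁ := by positivity
    have hdiff_term : 0 ≤ (1 - p₁ ^ 2) * (v₂ - v₁) :=
      mul_nonneg (by nlinarith) (sub_nonneg.mpr hv)
    linarith
  · rintro ⟨rfl, rfl⟩
    ring

/-- Algebraic content of Proposition 4: for `0 ≤ v₁ ≤ v₂`, `v₂ > 0`,
`p₁ ∈ [0,1]` and `p₂ = 1 − p₁`,
`p₁²v₁ + (p₂ + p₁p₂)v₂ ≥ (8/9)·(2p₂ + 2p₁² + 3p₁p₂)·(v₁/2 + (v₂−v₁)(1−p₁)/(2−p₁))`,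
with equality when `p₁ = p₂ = 1/2` and `v₁ = v₂` (the limit `v₂/v₁ → 1⁺`). -/
theorem greedy_linear_ratio_ge_eight_ninths
    (v₁ v₂ : ℝ) (hv₁ : 0 ≤ v₁) (hv : v₁ ≤ v₂) (hv₂ : 0 < v₂)
    (p₁ : ℝ) (hp₁0 : 0 ≤ p₁) (hp₁1 : p₁ ≤ 1) (p₂ : ℝ) (hp₂ : p₂ = 1 - p₁) :
    (p₁ ^ 2 * v₁ + (p₂ + p₁ * p₂) * v₂ ≥
      (8 / 9) * (2 * p₂ + 2 * p₁ ^ 2 + 3 * p₁ * p₂) *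
        (v₁ / 2 + (v₂ - v₁) * (1 - p₁) / (2 - p₁))) ∧
    ((p₁ = 1 / 2 ∧ v₁ = v₂) →
      p₁ ^ 2 * v₁ + (p₂ + p₁ * p₂) * v₂ =
        (8 / 9) * (2 * p₂ + 2 * p₁ ^ 2 + 3 * p₁ * p₂) *
          (v₁ / 2 + (v₂ - v₁) * (1 - p₁) / (2 - p₁))) :=
  greedy_linear_ratio_ge_eight_ninths_general v₁ v₂ hv₁ hv p₁ hp₁0 hp₁1 p₂ hp₂
end

section
/- Let K ≥ 1 be a natural number and let v₁, …, v_K be real numbers with 0 ≤ v₁ ≤ v₂ ≤ ⋯ ≤ v_K. Then Σ_{k=1}^K v_k · (K−1)^{K−k}/(K+1)^{K−k+1} ≥ (1 − ((K−1)/(K+1))^K) · Σ_{k=1}^K v_k · K/((2K+1−k)(2K−k)). -/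
/-!
Write the difference of the two sides as `∑ v k * excessCoeff K k`. As the `v k` are
nonnegative and nondecreasing, Abel summation reduces the claim to the nonnegativity of the tail
sums `∑_{K-n < k ≤ K} excessCoeff K k`. With `q = (K-1)/(K+1)` and the partial fractions
`K/((2K+1-k)(2K-k)) = K/(2K-k) - K/(2K+1-k)`, such a tail sum is a geometric sum minus a
telescoping one, namely `(1 - q^n)/2 - (1 - q^K) n/(K+n)`. Its sign is that of
`G n = (K+n)(1 - q^n) - 2n(1 - q^K)`, which vanishes at `n = 0` and `n = K` and is concave in `n`
because `(K+n) q^n` is convex.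
-/

open Finset

theorem sum_range_mul_nonneg_of_antitone_of_partial_sums_nonneg
    {R : Type*} [Ring R] [PartialOrder R] [IsOrderedRing R] {w c : ℕ → R} {N : ℕ}
    (hw : ∀ j, j + 1 < N → w (j + 1) ≤ w j) (hwN : 0 ≤ w (N - 1))
    (hc : ∀ n ≤ N, 0 ≤ ∑ j ∈ range n, c j) :
    0 ≤ ∑ j ∈ range N, w j * c j := by
  rw [show ∑ j ∈ range N, w j * c j = ∑ j ∈ range N, w j • c j from rfl, sum_range_by_parts]
  simp only [smul_eq_mul, sub_nonneg]
  calc ∑ i ∈ range (N - 1), (w (i + 1) - w i) * ∑ j ∈ range (i + 1), c j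
      ≤ 0 := sum_nonpos fun i hi => mul_nonpos_of_nonpos_of_nonneg
          (sub_nonpos.2 (hw i (by grind))) (hc _ (by grind))
    _ ≤ w (N - 1) * ∑ j ∈ range N, c j := mul_nonneg hwN (hc N le_rfl)

theorem nonneg_of_antitone_succ_sub_of_nonneg_ends
    {α : Type*} [AddCommGroup α] [LinearOrder α] [IsOrderedAddMonoid α] {G : ℕ → α} {N n : ℕ}
    (hG : Antitone fun m => G (m + 1) - G m) (h0 : 0 ≤ G 0) (hN : 0 ≤ G N) (hn : n ≤ N) :
    0 ≤ G n := by
  rcases le_total (G (n + 1) - G n) 0 with hdec | hinc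
  · have : G N - G n ≤ 0 := by
      rw [← sum_Ico_sub G hn]
      exact sum_nonpos fun m hm => (hG (mem_Ico.1 hm).1).trans hdec
    exact hN.trans (sub_nonpos.1 this)
  · have : 0 ≤ G n - G 0 := by
      rw [← sum_range_sub G]
      exact sum_nonneg fun m hm => hinc.trans (hG (mem_range.1 hm).le)
    exact h0.trans (sub_nonneg.1 this)

theorem monotone_add_mul_pow_succ_sub {a q : ℝ} (hq0 : 0 ≤ q) (hq1 : q ≤ 1)
    (ha : 2 * q ≤ a * (1 - q)) :
    Monotone fun m : ℕ => (a + (m + 1 : ℕ)) * q ^ (m + 1) - (a + m) * q ^ m := by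
  refine monotone_nat_of_le_succ fun m => sub_nonneg.1 ?_
  have hm : 0 ≤ (m : ℝ) * (1 - q) := mul_nonneg m.cast_nonneg (sub_nonneg.2 hq1)
  calc (0 : ℝ) ≤ q ^ m * (1 - q) * ((a + m) * (1 - q) - 2 * q) :=
        mul_nonneg (mul_nonneg (pow_nonneg hq0 m) (sub_nonneg.2 hq1)) (by linarith)
    _ = _ := by push_cast; ring

theorem two_mul_one_sub_pow_le {q : ℝ} {K n : ℕ} (hq0 : 0 ≤ q) (hq1 : q ≤ 1)
    (hK : 2 * q ≤ K * (1 - q)) (hn : n ≤ K) :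
    2 * n * (1 - q ^ K) ≤ (K + n) * (1 - q ^ n) := by
  set G : ℕ → ℝ := fun m => (K + m) * (1 - q ^ m) - 2 * m * (1 - q ^ K)
  have hconc : Antitone fun m => G (m + 1) - G m := by
    intro m m' hmm'
    have := monotone_add_mul_pow_succ_sub hq0 hq1 hK hmm'
    simp only [G] at this ⊢
    push_cast at this ⊢
    linarith
  have := nonneg_of_antitone_succ_sub_of_nonneg_ends hconc (by simp [G])
    (le_of_eq (by simp only [G]; ring)) hn
  simp only [G] at this
  linarith

noncomputable def excessCoeff (K k : ℕ) : ℝ :=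
  ((K : ℝ) - 1) ^ (K - k) / ((K : ℝ) + 1) ^ (K - k + 1) -
    (1 - (((K : ℝ) - 1) / ((K : ℝ) + 1)) ^ K) *
      ((K : ℝ) / ((2 * (K : ℝ) + 1 - (k : ℝ)) * (2 * (K : ℝ) - (k : ℝ))))

theorem excessCoeff_sub {K j : ℕ} (hj : j ≤ K) :
    excessCoeff K (K - j) = (((K : ℝ) - 1) / ((K : ℝ) + 1)) ^ j / ((K : ℝ) + 1) -
      (1 - (((K : ℝ) - 1) / ((K : ℝ) + 1)) ^ K) *
        ((K : ℝ) / (K + j) - (K : ℝ) / (K + (j + 1 : ℕ))) := by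
  rw [excessCoeff, Nat.sub_sub_self hj, Nat.cast_sub hj]
  congr 1
  · rw [div_pow, div_div, ← pow_succ]
  congr 1
  rcases Nat.eq_zero_or_pos K with rfl | hK
  · simp
  · have : (0 : ℝ) < K := by exact_mod_cast hK
    rw [div_sub_div _ _ (by positivity) (by positivity)]
    push_cast
    ring

theorem sum_range_excessCoeff_sub {K n : ℕ} (hK : 1 ≤ K) (hn : n ≤ K) :
    ∑ j ∈ range n, excessCoeff K (K - j) =
      (1 - (((K : ℝ) - 1) / ((K : ℝ) + 1)) ^ n) / 2 -
        (1 - (((K : ℝ) - 1) / ((K : ℝ) + 1)) ^ K) * (n / (K + n)) := by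
  set q := ((K : ℝ) - 1) / ((K : ℝ) + 1)
  have hK0 : (0 : ℝ) < K := by exact_mod_cast hK
  have hq : q ≠ 1 := by
    simp only [q]; rw [ne_eq, div_eq_one_iff_eq (by positivity)]; linarith
  rw [sum_congr rfl fun j hj => excessCoeff_sub ((mem_range.1 hj).le.trans hn), sum_sub_distrib,
    ← sum_div, ← mul_sum, sum_range_sub' (fun j : ℕ => (K : ℝ) / (K + j)), geom_sum_eq hq]
  simp only [q]
  field_simp
  ring

theorem sum_range_excessCoeff_sub_nonneg {K n : ℕ} (hK : 1 ≤ K) (hn : n ≤ K) :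
    0 ≤ ∑ j ∈ range n, excessCoeff K (K - j) := by
  set q := ((K : ℝ) - 1) / ((K : ℝ) + 1)
  have hK1 : (1 : ℝ) ≤ K := by exact_mod_cast hK
  have hq0 : 0 ≤ q := div_nonneg (by linarith) (by positivity)
  have hq1 : q ≤ 1 := (div_le_one (by positivity)).2 (by linarith)
  have hqK : 2 * q ≤ K * (1 - q) := by
    have : K * (1 - q) - 2 * q = 2 / (K + 1) := by simp only [q]; field_simp; ring
    linarith [show (0 : ℝ) < 2 / (K + 1) by positivity]
  have key := two_mul_one_sub_pow_le hq0 hq1 hqK hn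
  rw [sum_range_excessCoeff_sub hK hn, sub_nonneg, ← mul_div_assoc,
    div_le_div_iff₀ (by positivity) two_pos]
  linarith

theorem sum_Icc_one_eq_sum_range_sub {M : Type*} [AddCommMonoid M] (f : ℕ → M) (K : ℕ) :
    ∑ k ∈ Icc 1 K, f k = ∑ j ∈ range K, f (K - j) := by
  rw [range_eq_Ico, sum_Ico_reflect f 0 le_self_add, Nat.add_sub_cancel_left, Nat.sub_zero,
    Ico_add_one_right_eq_Icc]

/-- Algebraic content of Proposition 5: for `0 ≤ v 1 ≤ v 2 ≤ ⋯ ≤ v K`,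
`∑_{k=1}^K v k · (K−1)^{K−k}/(K+1)^{K−k+1}`
`≥ (1 − ((K−1)/(K+1))^K) · ∑_{k=1}^K v k · K/((2K+1−k)(2K−k))`. -/
theorem greedy_linear_uniform_ratio_bound
    (K : ℕ) (hK : 1 ≤ K) (v : ℕ → ℝ) (h0 : 0 ≤ v 1)
    (hmono : ∀ k, 1 ≤ k → k < K → v k ≤ v (k + 1)) :
    ∑ k ∈ Finset.Icc 1 K,
        v k * (((K : ℝ) - 1) ^ (K - k) / ((K : ℝ) + 1) ^ (K - k + 1)) ≥
      (1 - (((K : ℝ) - 1) / ((K : ℝ) + 1)) ^ K) *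
        ∑ k ∈ Finset.Icc 1 K,
          v k * ((K : ℝ) / ((2 * (K : ℝ) + 1 - (k : ℝ)) * (2 * (K : ℝ) - (k : ℝ)))) := by
  rw [ge_iff_le, ← sub_nonneg, mul_sum, ← sum_sub_distrib]
  simp only [mul_left_comm _ (v _), ← mul_sub, ← excessCoeff.eq_1]
  rw [sum_Icc_one_eq_sum_range_sub]
  refine sum_range_mul_nonneg_of_antitone_of_partial_sums_nonneg (fun j hj => ?_) ?_
    fun n hn => sum_range_excessCoeff_sub_nonneg hK hn
  · simpa [show K - (j + 1) + 1 = K - j by omega] using hmono (K - (j + 1)) (by omega) (by omega)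
  · rwa [Nat.sub_sub_self hK]
end

section
/- Let K ≥ 1 be a natural number, let v₁, …, v_K ∈ ℝ, and define β_k = (K−1)^{K−k}·(K+1)^{k−1}/K^K and γ_k = (1/K^{k+1})·Σ_{i=k}^K i·C(i−1, k−1) for k = 1, …, K. Let a : ℕ → ℝ be any sequence satisfying a(n) = Σ_{k=1}^K β_k v_k + Σ_{k=1}^K γ_k·a(n−k−1) for all n ≥ K+2. Then a(n)/n converges, as n → ∞, to (Σ_{k=1}^K β_k v_k)/(Σ_{k=1}^K (k+1)γ_k). -/
/-!
Subtracting the line `c n`, with `c = (∑ β_k v_k) / (∑ (k+1) γ_k)`, turns the affine recurrence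
into the homogeneous one `b n = ∑ γ_k b (n-k-1)`. The weights `γ_k` are nonnegative and sum to
one (binomial theorem in the inner sum, then a telescoping sum), so every `b n` is a convex
combination of earlier values and `b` stays bounded by its initial values; hence
`a n / n = c + b n / n → c`.
-/

open Filter Finset Topology

section RenewalRecurrence

variable {s : Finset ℕ} {w : ℕ → ℝ} {N : ℕ}

theorem abs_le_sum_abs_of_convex_recurrence (hw0 : ∀ k ∈ s, 0 ≤ w k)
    (hw1 : ∑ k ∈ s, w k = 1) (hN : 0 < N) {b : ℕ → ℝ}
    (hb : ∀ n, N ≤ n → b n = ∑ k ∈ s, w k * b (n - k - 1)) (n : ℕ) :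
    |b n| ≤ ∑ j ∈ range N, |b j| := by
  induction n using Nat.strong_induction_on with
  | _ n ih =>
    rcases lt_or_ge n N with hn | hn
    · exact single_le_sum (fun j _ => abs_nonneg (b j)) (mem_range.2 hn)
    · calc |b n| = |∑ k ∈ s, w k * b (n - k - 1)| := by rw [hb n hn]
        _ ≤ ∑ k ∈ s, w k * ∑ j ∈ range N, |b j| := by
          refine (abs_sum_le_sum_abs _ _).trans (sum_le_sum fun k hk => ?_)
          rw [abs_mul, abs_of_nonneg (hw0 k hk)]
          exact mul_le_mul_of_nonneg_left (ih _ (by omega)) (hw0 k hk)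
        _ = ∑ j ∈ range N, |b j| := by rw [← sum_mul, hw1, one_mul]

theorem sub_mul_eq_sum_of_renewal_recurrence (hw1 : ∑ k ∈ s, w k = 1)
    (hN : ∀ k ∈ s, k + 1 ≤ N) {a : ℕ → ℝ} {B c : ℝ}
    (hc : c * ∑ k ∈ s, ((k : ℝ) + 1) * w k = B)
    (ha : ∀ n, N ≤ n → a n = B + ∑ k ∈ s, w k * a (n - k - 1)) (n : ℕ) (hn : N ≤ n) :
    a n - c * n = ∑ k ∈ s, w k * (a (n - k - 1) - c * ↑(n - k - 1)) := by
  have hcast : ∀ k ∈ s, ((n - k - 1 : ℕ) : ℝ) = n - (k + 1) := fun k hk => by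
    rw [Nat.sub_sub, Nat.cast_sub (by linarith [hN k hk]), Nat.cast_add, Nat.cast_one]
  have hlin : ∑ k ∈ s, w k * (c * ↑(n - k - 1)) = c * n - B := by
    calc ∑ k ∈ s, w k * (c * ↑(n - k - 1))
        = c * n * ∑ k ∈ s, w k - c * ∑ k ∈ s, ((k : ℝ) + 1) * w k := by
          rw [mul_sum, mul_sum, ← sum_sub_distrib]
          exact sum_congr rfl fun k hk => by rw [hcast k hk]; ring
      _ = c * n - B := by rw [hw1, hc, mul_one]
  rw [ha n hn]
  simp only [mul_sub, sum_sub_distrib, hlin]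
  ring

theorem tendsto_div_of_renewal_recurrence (hw0 : ∀ k ∈ s, 0 ≤ w k)
    (hw1 : ∑ k ∈ s, w k = 1) (hN : ∀ k ∈ s, k + 1 ≤ N) {a : ℕ → ℝ} {B : ℝ}
    (ha : ∀ n, N ≤ n → a n = B + ∑ k ∈ s, w k * a (n - k - 1)) :
    Tendsto (fun n : ℕ => a n / n) atTop (𝓝 (B / ∑ k ∈ s, ((k : ℝ) + 1) * w k)) := by
  set D := ∑ k ∈ s, ((k : ℝ) + 1) * w k
  set c := B / D
  have hD : 0 < D := by
    refine one_pos.trans_le (hw1 ▸ sum_le_sum fun k hk => ?_)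
    nlinarith [hw0 k hk, (Nat.cast_nonneg k : (0 : ℝ) ≤ k)]
  have hN0 : 0 < N := by
    obtain ⟨k, hk⟩ := nonempty_of_sum_ne_zero (hw1 ▸ one_ne_zero : ∑ k ∈ s, w k ≠ 0)
    linarith [hN k hk]
  set M := ∑ j ∈ range N, |a j - c * j|
  have hbound : ∀ n, |a n - c * n| ≤ M :=
    abs_le_sum_abs_of_convex_recurrence (b := fun n => a n - c * n) hw0 hw1 hN0
      (sub_mul_eq_sum_of_renewal_recurrence hw1 hN (div_mul_cancel₀ B hD.ne') ha)
  have hdev : Tendsto (fun n : ℕ => (a n - c * n) / n) atTop (𝓝 0) :=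
    tendsto_bdd_div_atTop_nhds_zero (b := -M) (B := M)
      (Eventually.of_forall fun n => (abs_le.1 (hbound n)).1)
      (Eventually.of_forall fun n => (abs_le.1 (hbound n)).2) tendsto_natCast_atTop_atTop
  refine (add_zero c ▸ hdev.const_add c).congr' ?_
  filter_upwards [eventually_ne_atTop 0] with n hn
  field_simp
  ring

end RenewalRecurrence

theorem sum_Icc_one_eq_sum_range {M : Type*} [AddCommMonoid M] (f : ℕ → M) (n : ℕ) :
    ∑ i ∈ Icc 1 n, f i = ∑ i ∈ range n, f (i + 1) := by
  rw [range_eq_Ico, sum_Ico_add' f 0 n 1, zero_add, Ico_add_one_right_eq_Icc]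

theorem sum_Icc_choose_div_pow (x : ℝ) (m : ℕ) :
    ∑ k ∈ Icc 1 (m + 1), (m.choose (k - 1) : ℝ) / x ^ (k + 1) = (1 + x⁻¹) ^ m / x ^ 2 := by
  rw [sum_Icc_one_eq_sum_range, add_comm (1 : ℝ), add_pow, sum_div]
  refine sum_congr rfl fun j _ => ?_
  rw [Nat.add_sub_cancel, one_pow, mul_one, inv_pow, show j + 1 + 1 = j + 2 by ring, pow_add]
  field_simp

theorem sum_range_succ_mul_one_add_inv_pow {x : ℝ} (hx : x ≠ 0) (n : ℕ) :
    ∑ i ∈ range n, ((i : ℝ) + 1) * (1 + x⁻¹) ^ i = x * (n - x) * (1 + x⁻¹) ^ n + x ^ 2 := by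
  have htel : ∀ i : ℕ, ((i : ℝ) + 1) * (1 + x⁻¹) ^ i
      = x * ((i + 1 : ℕ) - x) * (1 + x⁻¹) ^ (i + 1) - x * (i - x) * (1 + x⁻¹) ^ i := by
    intro i
    rw [pow_succ]
    push_cast
    field_simp
    ring
  rw [sum_congr rfl fun i _ => htel i,
    sum_range_sub (fun i : ℕ => x * ((i : ℝ) - x) * (1 + x⁻¹) ^ i)]
  simp only [Nat.cast_zero, zero_sub, pow_zero]
  ring

/-- The paper's `γ_k`. -/
noncomputable def greedyWeight (K k : ℕ) : ℝ :=
  (1 / (K : ℝ) ^ (k + 1)) * ∑ i ∈ Icc k K, (i : ℝ) * (Nat.choose (i - 1) (k - 1) : ℝ)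

theorem greedyWeight_nonneg (K k : ℕ) : 0 ≤ greedyWeight K k := by
  unfold greedyWeight
  positivity

theorem sum_greedyWeight {K : ℕ} (hK : 1 ≤ K) : ∑ k ∈ Icc 1 K, greedyWeight K k = 1 := by
  have hK0 : (K : ℝ) ≠ 0 := by positivity
  calc ∑ k ∈ Icc 1 K, greedyWeight K k
      = ∑ i ∈ Icc 1 K,
          (i : ℝ) * ∑ k ∈ Icc 1 i, ((i - 1).choose (k - 1) : ℝ) / (K : ℝ) ^ (k + 1) := by
        simp only [greedyWeight, mul_sum]
        rw [sum_comm' (t' := Icc 1 K) (s' := fun i => Icc 1 i)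
          (fun k i => by simp only [mem_Icc]; omega)]
        exact sum_congr rfl fun i _ => sum_congr rfl fun k _ => by ring
    _ = ∑ i ∈ range K, ((i : ℝ) + 1) * (1 + (K : ℝ)⁻¹) ^ i / (K : ℝ) ^ 2 := by
        rw [sum_Icc_one_eq_sum_range]
        refine sum_congr rfl fun i _ => ?_
        rw [Nat.add_sub_cancel, sum_Icc_choose_div_pow, Nat.cast_succ]
        ring
    _ = 1 := by
        rw [← sum_div, sum_range_succ_mul_one_add_inv_pow hK0, sub_self]
        field_simp
        ring

theorem greedy_linear_uniform_recurrence_asymptotics_general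
    (K : ℕ) (hK : 1 ≤ K) (v : ℕ → ℝ) (β γ : ℕ → ℝ)
    (hγ : ∀ k, 1 ≤ k → k ≤ K →
      γ k = (1 / (K : ℝ) ^ (k + 1)) *
        ∑ i ∈ Finset.Icc k K, (i : ℝ) * (Nat.choose (i - 1) (k - 1) : ℝ))
    (a : ℕ → ℝ)
    (ha : ∀ n : ℕ, K + 2 ≤ n →
      a n = (∑ k ∈ Finset.Icc 1 K, β k * v k) +
        ∑ k ∈ Finset.Icc 1 K, γ k * a (n - k - 1)) :
    Tendsto (fun n : ℕ => a n / n) atTop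
      (nhds ((∑ k ∈ Finset.Icc 1 K, β k * v k) /
        (∑ k ∈ Finset.Icc 1 K, ((k : ℝ) + 1) * γ k))) := by
  have hγ_eq : ∀ k ∈ Icc 1 K, γ k = greedyWeight K k :=
    fun k hk => hγ k (mem_Icc.1 hk).1 (mem_Icc.1 hk).2
  refine tendsto_div_of_renewal_recurrence (fun k hk => ?_) ?_ (fun k hk => ?_) ha
  · exact hγ_eq k hk ▸ greedyWeight_nonneg K k
  · rw [sum_congr rfl hγ_eq]
    exact sum_greedyWeight hK
  · linarith [(mem_Icc.1 hk).2]

/-- Proposition 3: any sequence satisfying the renewal recurrence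
`a n = ∑_{k=1}^K β_k v_k + ∑_{k=1}^K γ_k · a (n−k−1)` for `n ≥ K+2`, with
`β_k = (K−1)^{K−k} (K+1)^{k−1} / K^K` and
`γ_k = (1/K^{k+1}) ∑_{i=k}^K i·C(i−1,k−1)` for `1 ≤ k ≤ K`, satisfies
`a n / n → (∑_k β_k v_k)/(∑_k (k+1)γ_k)`. -/
theorem greedy_linear_uniform_recurrence_asymptotics
    (K : ℕ) (hK : 1 ≤ K) (v : ℕ → ℝ) (β γ : ℕ → ℝ)
    (hβ : ∀ k, 1 ≤ k → k ≤ K →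
      β k = ((K : ℝ) - 1) ^ (K - k) * ((K : ℝ) + 1) ^ (k - 1) / (K : ℝ) ^ K)
    (hγ : ∀ k, 1 ≤ k → k ≤ K →
      γ k = (1 / (K : ℝ) ^ (k + 1)) *
        ∑ i ∈ Finset.Icc k K, (i : ℝ) * (Nat.choose (i - 1) (k - 1) : ℝ))
    (a : ℕ → ℝ)
    (ha : ∀ n : ℕ, K + 2 ≤ n →
      a n = (∑ k ∈ Finset.Icc 1 K, β k * v k) +
        ∑ k ∈ Finset.Icc 1 K, γ k * a (n - k - 1)) :
    Tendsto (fun n : ℕ => a n / n) atTop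
      (nhds ((∑ k ∈ Finset.Icc 1 K, β k * v k) /
        (∑ k ∈ Finset.Icc 1 K, ((k : ℝ) + 1) * γ k))) :=
  greedy_linear_uniform_recurrence_asymptotics_general K hK v β γ hγ a ha
end

section
/- For every real x > 0, there exists a unique y in the open interval (0,1) satisfying y = e^{−x} · Σ_{i=0}^∞ x^i·(1 − (1−y)^{i+1}) / ((i+1)!·y), where the series on the right converges. -/
/-!
Summing the two exponential series turns the right-hand side into
`e^{-x} (e^x - e^{x(1-y)}) / (x y)`, so for `y > 0` the equation says `G y = 1` with
`G y = e^{-x y} + x y²`. The function `G` is strictly convex with `G 0 = 1`, hence takes the value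
`1` at most once on `(0, ∞)`; and `G` dips below `1` near `0` while `G 1 = e^{-x} + x > 1`,
so the intermediate value theorem gives a solution in `(0, 1)`.
-/

open Real Set

theorem StrictConvexOn.const_mul {E : Type*} [AddCommGroup E] [Module ℝ E] {s : Set E}
    {f : E → ℝ} (hf : StrictConvexOn ℝ s f) {c : ℝ} (hc : 0 < c) :
    StrictConvexOn ℝ s fun z => c * f z := by
  refine ⟨hf.1, fun u hu v hv huv a b ha hb hab => ?_⟩
  have key := mul_lt_mul_of_pos_left (hf.2 hu hv huv ha hb hab) hc
  simp only [smul_eq_mul] at key ⊢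
  linarith

theorem StrictConvexOn.eq_of_gt_of_apply_eq {s : Set ℝ} {f : ℝ → ℝ} (hf : StrictConvexOn ℝ s f)
    {a y z : ℝ} (ha : a ∈ s) (hy : y ∈ s) (hz : z ∈ s) (hay : a < y) (haz : a < z)
    (hfy : f y = f a) (hfz : f z = f a) : y = z := by
  by_contra hne
  rcases lt_or_gt_of_ne hne with hlt | hlt
  · have := hf.secant_strict_mono ha hy hz hay.ne' haz.ne' hlt
    simp [hfy, hfz] at this
  · have := hf.secant_strict_mono ha hz hy haz.ne' hay.ne' hlt
    simp [hfy, hfz] at this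

theorem hasSum_pow_succ_div_factorial (z : ℝ) :
    HasSum (fun i : ℕ => z ^ (i + 1) / ((i + 1).factorial : ℝ)) (exp z - 1) := by
  have h := NormedSpace.expSeries_div_hasSum_exp z
  rw [← Real.exp_eq_exp_ℝ, ← hasSum_nat_add_iff' 1] at h
  simpa using h

theorem hasSum_proposal_series {x y : ℝ} (hx : x ≠ 0) (hy : y ≠ 0) :
    HasSum (fun i : ℕ => x ^ i * (1 - (1 - y) ^ (i + 1)) / ((i + 1).factorial * y))
      ((exp x - exp (x * (1 - y))) / (x * y)) := by
  have h := ((hasSum_pow_succ_div_factorial x).sub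
    (hasSum_pow_succ_div_factorial (x * (1 - y)))).div_const (x * y)
  rw [sub_sub_sub_cancel_right] at h
  refine h.congr_fun fun i => ?_
  have hfac : ((i + 1).factorial : ℝ) ≠ 0 := Nat.cast_ne_zero.2 (Nat.factorial_ne_zero _)
  rw [mul_pow]
  field_simp
  ring

theorem proposal_fixed_point_iff {x y : ℝ} (hx : 0 < x) (hy : 0 < y) :
    y = exp (-x) * ((exp x - exp (x * (1 - y))) / (x * y)) ↔ exp (-(x * y)) + x * y ^ 2 = 1 := by
  have hnum : exp (-x) * (exp x - exp (x * (1 - y))) = 1 - exp (-(x * y)) := by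
    rw [mul_sub, ← exp_add, ← exp_add, neg_add_cancel, exp_zero]
    ring_nf
  rw [← mul_div_assoc, hnum, eq_div_iff (mul_pos hx hy).ne']
  constructor <;> intro h <;> linarith

theorem strictConvexOn_exp_neg_mul_add_mul_sq {x : ℝ} (hx : 0 < x) :
    StrictConvexOn ℝ univ fun y => exp (-(x * y)) + x * y ^ 2 := by
  have hexp : ConvexOn ℝ univ fun y => exp (-(x * y)) := by
    refine (convexOn_exp.comp_linearMap ((-x) • LinearMap.id)).congr fun y _ => ?_
    simp
  exact hexp.add_strictConvexOn ((even_two.strictConvexOn_pow two_ne_zero).const_mul hx)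

theorem exists_mem_Ioo_exp_neg_mul_add_mul_sq_lt_one {x : ℝ} (hx : 0 < x) :
    ∃ y ∈ Ioo (0 : ℝ) 1, exp (-(x * y)) + x * y ^ 2 < 1 := by
  set y := 1 / (x + 2)
  have hy : 0 < y := by positivity
  have hxy : x * y < 1 := by rw [mul_one_div, div_lt_one (by linarith)]; linarith
  have hy1 : y < 1 / 2 := by rw [one_div_lt_one_div (by linarith) two_pos]; linarith
  have hexp : exp (-(x * y)) * (1 + x * y) < 1 := by
    have := add_one_lt_exp (mul_pos hx hy).ne'
    rw [exp_neg, inv_mul_lt_one₀ (exp_pos _)]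
    linarith
  refine ⟨y, ⟨hy, by linarith⟩, ?_⟩
  nlinarith [mul_pos (mul_pos hx hy) hy, exp_pos (-(x * y)), mul_pos hx hy]

/-- For every `x > 0` there is a unique `y ∈ (0,1)` with
`y = e^{−x} ∑_{i=0}^∞ x^i (1 − (1−y)^{i+1}) / ((i+1)!·y)`, the series converging. -/
theorem fixed_point_proposal_probability (x : ℝ) (hx : 0 < x) :
    ∃! y : ℝ, y ∈ Set.Ioo (0 : ℝ) 1 ∧
      Summable (fun i : ℕ =>
        x ^ i * (1 - (1 - y) ^ (i + 1)) / ((Nat.factorial (i + 1) : ℝ) * y)) ∧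
      y = Real.exp (-x) *
        ∑' i : ℕ,
          x ^ i * (1 - (1 - y) ^ (i + 1)) / ((Nat.factorial (i + 1) : ℝ) * y) := by
  set G : ℝ → ℝ := fun y => exp (-(x * y)) + x * y ^ 2
  have hG : StrictConvexOn ℝ univ G := strictConvexOn_exp_neg_mul_add_mul_sq hx
  have hG0 : G 0 = 1 := by simp [G]
  have hG1 : 1 < G 1 := by
    have := add_one_lt_exp (neg_ne_zero.2 hx.ne')
    simp only [G, mul_one, one_pow]
    linarith
  have hsolves {y : ℝ} (hy : 0 < y) : (Summable fun i : ℕ =>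
      x ^ i * (1 - (1 - y) ^ (i + 1)) / ((Nat.factorial (i + 1) : ℝ) * y)) ∧
      (y = exp (-x) * ∑' i : ℕ,
        x ^ i * (1 - (1 - y) ^ (i + 1)) / ((Nat.factorial (i + 1) : ℝ) * y) ↔ G y = 1) := by
    have hsum := hasSum_proposal_series hx.ne' hy.ne'
    exact ⟨hsum.summable, hsum.tsum_eq ▸ proposal_fixed_point_iff hx hy⟩
  obtain ⟨y₀, hy₀, hGy₀⟩ := exists_mem_Ioo_exp_neg_mul_add_mul_sq_lt_one hx
  obtain ⟨y, hy, hGy⟩ := intermediate_value_Ioo hy₀.2.le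
    (by fun_prop : Continuous G).continuousOn ⟨hGy₀, hG1⟩
  have hy01 : y ∈ Ioo (0 : ℝ) 1 := ⟨hy₀.1.trans hy.1, hy.2⟩
  refine ⟨y, ⟨hy01, (hsolves hy01.1).1, (hsolves hy01.1).2.2 hGy⟩, ?_⟩
  rintro z ⟨hz, -, hzG⟩
  exact hG.eq_of_gt_of_apply_eq (mem_univ 0) (mem_univ z) (mem_univ y) hz.1 hy01.1
    (((hsolves hz.1).2.1 hzG).trans hG0.symm) (hGy.trans hG0.symm)
end
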